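/- Lemma (approximation of the two-boundary interface energy, Section 5.1). For the FA-1f model with two empty boundaries at density ρ∈(0,1), let L,L'≥1 be integers and u∈(0,1). Then for every f:Ω_{L+L'+4}→[0,∞) with ν(f)=1 and ν(f·η_{L+1}η_{L+2}η_{L+3}η_{L+4}) ≥ 1−u, one has 𝒟_{L+L'+4}(√f) ≥ Σ_{L+1,L'+1} − (8√(ρ(1−ρ)) + Σ_{L+1,L'+1})·u. -/
import Mathlib


open Finset Filter

open scoped Classical

/-- A configuration on the box `{1,…,N}` (0-indexed by `Fin N`). -/
abbrev Config (N : ℕ) := Fin N → Bool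

/-- Occupation variable `η_i ∈ {0,1}` as a real number. -/
noncomputable def occ {N : ℕ} (η : Config N) (i : Fin N) : ℝ := if η i then 1 else 0

/-- Bernoulli(ρ) product weight of a configuration. -/
noncomputable def bern (ρ : ℝ) {N : ℕ} (η : Config N) : ℝ :=
  ∏ i, (if η i then ρ else 1 - ρ)

/-- Expectation under the Bernoulli(ρ) product measure `ν`. -/
noncomputable def expect (ρ : ℝ) {N : ℕ} (f : Config N → ℝ) : ℝ :=
  ∑ η : Config N, bern ρ η * f η

/-- The configuration `η^i`, obtained by flipping `η` at site `i`. -/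
def flipAt {N : ℕ} (η : Config N) (i : Fin N) : Config N :=
  Function.update η i (!η i)

/-- Occupation at the 1-indexed position `k ∈ {0,…,N+1}`, with boundary value
`bl` at `k = 0` and `br` at `k = N+1` (and beyond). -/
noncomputable def occAt {N : ℕ} (η : Config N) (bl br : ℝ) (k : ℕ) : ℝ :=
  if hk : k = 0 then bl
  else if h : k ≤ N then (if η ⟨k - 1, by omega⟩ then 1 else 0) else br

/-- The three kinetically constrained models considered: East (empty right boundary),
FA-1f with two empty boundaries, FA-1f with one empty (right) boundary. -/
inductive KCM | east | fa2 | fa1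

/-- The kinetic constraint `r_i(η)` of each model, at the (0-indexed) site `i`. -/
noncomputable def constr (m : KCM) {N : ℕ} (η : Config N) (i : Fin N) : ℝ :=
  match m with
  | KCM.east => 1 - occAt η 0 0 (i.1 + 2)
  | KCM.fa2  => 1 - occAt η 0 0 i.1 * occAt η 0 0 (i.1 + 2)
  | KCM.fa1  => 1 - occAt η 1 0 i.1 * occAt η 1 0 (i.1 + 2)

/-- The jump rate `c_i(η) = r_i(η)·[η_i(1−ρ)+(1−η_i)ρ]`. -/
noncomputable def crate (m : KCM) (ρ : ℝ) {N : ℕ} (η : Config N) (i : Fin N) : ℝ :=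
  constr m η i * (if η i then 1 - ρ else ρ)

/-- The escape rate `𝓗(η) = Σ_i c_i(η)`. -/
noncomputable def escRate (m : KCM) (ρ : ℝ) {N : ℕ} (η : Config N) : ℝ :=
  ∑ i, crate m ρ η i

/-- The Dirichlet form `𝒟_N(g) = Σ_i ν(c_i(η)(g(η^i)−g(η))²)`. -/
noncomputable def dirichlet (m : KCM) (ρ : ℝ) {N : ℕ} (g : Config N → ℝ) : ℝ :=
  ∑ i, expect ρ (fun η => crate m ρ η i * (g (flipAt η i) - g η) ^ 2)

/-- The rescaled cumulant generating function `φ^{(N)}(λ)`, via the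
Donsker–Varadhan variational (principal eigenvalue) formula. -/
noncomputable def phi (m : KCM) (ρ : ℝ) (N : ℕ) (lam : ℝ) : ℝ :=
  sSup { x | ∃ f : Config N → ℝ, (∀ η, 0 ≤ f η) ∧ expect ρ f = 1 ∧
    x = (Real.exp lam - 1) * expect ρ (fun η => f η * escRate m ρ η)
        - Real.exp lam * dirichlet m ρ (fun η => Real.sqrt (f η)) }

/-- The mean instantaneous activity `𝔸 = ν(c_j)` at an interior site `j`:
`2ρ(1−ρ)²` for East and `2ρ(1−ρ)(1−ρ²)` for FA-1f. -/
noncomputable def meanAct (m : KCM) (ρ : ℝ) : ℝ :=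
  match m with
  | KCM.east => 2 * ρ * (1 - ρ) ^ 2
  | _ => 2 * ρ * (1 - ρ) * (1 - ρ ^ 2)

/-- The two-boundary interface energy `Σ_{L,L'}` for FA-1f with two empty
boundaries: the infimum of `𝒟_{L+L'+2}(√f)` over probability densities `f`
with `ν(f·η_{L+1}η_{L+2}) = 1`. -/
noncomputable def SigmaTwo (ρ : ℝ) (L L' : ℕ) : ℝ :=
  sInf { x | ∃ f : Config (L + L' + 2) → ℝ, (∀ η, 0 ≤ f η) ∧ expect ρ f = 1 ∧
    expect ρ (fun η => f η * occ η ⟨L, by omega⟩ * occ η ⟨L + 1, by omega⟩) = 1 ∧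
    x = dirichlet KCM.fa2 ρ (fun η => Real.sqrt (f η)) }

/-- The one-boundary interface energy `Σ_L`: the infimum of `𝒟_L(√f)`
over probability densities `f` with `ν(f·η_1) = 1`, for the model `m`. -/
noncomputable def SigmaOne (m : KCM) (ρ : ℝ) (L : ℕ) : ℝ :=
  sInf { x | ∃ f : Config L → ℝ, (∀ η, 0 ≤ f η) ∧ expect ρ f = 1 ∧
    expect ρ (fun η => f η * occAt η 0 0 1) = 1 ∧
    x = dirichlet m ρ (fun η => Real.sqrt (f η)) }

section Helpers

variable {N : ℕ}

lemma occ_zero_or_one (η : Config N) (i : Fin N) : occ η i = 0 ∨ occ η i = 1 := by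
  unfold occ; by_cases h : η i <;> simp [h]

lemma occ_nonneg (η : Config N) (i : Fin N) : 0 ≤ occ η i := by
  rcases occ_zero_or_one η i with h | h <;> rw [h] <;> norm_num

lemma bern_nonneg {ρ : ℝ} (h0 : 0 ≤ ρ) (h1 : ρ ≤ 1) (η : Config N) : 0 ≤ bern ρ η :=
  Finset.prod_nonneg fun i _ => by by_cases h : η i <;> simp [h] <;> linarith

lemma expect_nonneg {ρ : ℝ} (h0 : 0 ≤ ρ) (h1 : ρ ≤ 1) {F : Config N → ℝ}
    (hF : ∀ η, 0 ≤ F η) : 0 ≤ expect ρ F :=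
  Finset.sum_nonneg fun η _ => mul_nonneg (bern_nonneg h0 h1 η) (hF η)

lemma expect_mono {ρ : ℝ} (h0 : 0 ≤ ρ) (h1 : ρ ≤ 1) {F G : Config N → ℝ}
    (h : ∀ η, F η ≤ G η) : expect ρ F ≤ expect ρ G :=
  Finset.sum_le_sum fun η _ => mul_le_mul_of_nonneg_left (h η) (bern_nonneg h0 h1 η)

lemma expect_add (ρ : ℝ) (F G : Config N → ℝ) :
    expect ρ (fun η => F η + G η) = expect ρ F + expect ρ G := by
  unfold _root_.expect
  rw [← Finset.sum_add_distrib]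
  exact Finset.sum_congr rfl fun η _ => by ring

lemma expect_sub (ρ : ℝ) (F G : Config N → ℝ) :
    expect ρ (fun η => F η - G η) = expect ρ F - expect ρ G := by
  unfold _root_.expect
  rw [← Finset.sum_sub_distrib]
  exact Finset.sum_congr rfl fun η _ => by ring

lemma expect_div (ρ : ℝ) (F : Config N → ℝ) (Z : ℝ) :
    expect ρ (fun η => F η / Z) = expect ρ F / Z := by
  unfold _root_.expect
  rw [Finset.sum_div]
  exact Finset.sum_congr rfl fun η _ => by ring

lemma expect_const_mul (ρ : ℝ) (c : ℝ) (F : Config N → ℝ) :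
    expect ρ (fun η => c * F η) = c * expect ρ F := by
  unfold _root_.expect
  rw [Finset.mul_sum]
  exact Finset.sum_congr rfl fun η _ => by ring

lemma occAt_zero_or_one {bl br : ℝ} (hbl : bl = 0 ∨ bl = 1) (hbr : br = 0 ∨ br = 1)
    (η : Config N) (k : ℕ) : occAt η bl br k = 0 ∨ occAt η bl br k = 1 := by
  unfold occAt
  split
  · exact hbl
  · split
    · split <;> simp
    · exact hbr

lemma constr_zero_or_one (m : KCM) (η : Config N) (i : Fin N) :
    constr m η i = 0 ∨ constr m η i = 1 := by
  have h01 : (0:ℝ) = 0 ∨ (0:ℝ) = 1 := Or.inl rfl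
  have h11 : (1:ℝ) = 0 ∨ (1:ℝ) = 1 := Or.inr rfl
  cases m <;> unfold constr
  · rcases occAt_zero_or_one h01 h01 η (i.1+2) with h | h <;> rw [h] <;> norm_num
  · rcases occAt_zero_or_one h01 h01 η i.1 with h | h <;>
      rcases occAt_zero_or_one h01 h01 η (i.1+2) with h' | h' <;> rw [h, h'] <;> norm_num
  · rcases occAt_zero_or_one h11 h01 η i.1 with h | h <;>
      rcases occAt_zero_or_one h11 h01 η (i.1+2) with h' | h' <;> rw [h, h'] <;> norm_num

lemma constr_nonneg (m : KCM) (η : Config N) (i : Fin N) : 0 ≤ constr m η i := by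
  rcases constr_zero_or_one m η i with h | h <;> rw [h] <;> norm_num

lemma constr_le_one (m : KCM) (η : Config N) (i : Fin N) : constr m η i ≤ 1 := by
  rcases constr_zero_or_one m η i with h | h <;> rw [h] <;> norm_num

lemma crate_nonneg (m : KCM) {ρ : ℝ} (h0 : 0 ≤ ρ) (h1 : ρ ≤ 1) (η : Config N) (i : Fin N) :
    0 ≤ crate m ρ η i := by
  unfold crate
  apply mul_nonneg (constr_nonneg m η i)
  by_cases h : η i <;> simp [h] <;> linarith

lemma dirichlet_nonneg (m : KCM) {ρ : ℝ} (h0 : 0 ≤ ρ) (h1 : ρ ≤ 1) (g : Config N → ℝ) :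
    0 ≤ dirichlet m ρ g :=
  Finset.sum_nonneg fun i _ => expect_nonneg h0 h1 fun η =>
    mul_nonneg (crate_nonneg m h0 h1 η i) (sq_nonneg _)

lemma flipAt_self (η : Config N) (i : Fin N) : flipAt η i i = !η i := by
  unfold flipAt; rw [Function.update_self]

lemma flipAt_ne (η : Config N) {i j : Fin N} (h : j ≠ i) : flipAt η i j = η j := by
  unfold flipAt; rw [Function.update_of_ne h]

lemma flipAt_flipAt (η : Config N) (i : Fin N) : flipAt (flipAt η i) i = η := by
  funext j
  by_cases h : j = i
  · subst h; rw [flipAt_self, flipAt_self, Bool.not_not]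
  · rw [flipAt_ne _ h, flipAt_ne _ h]

lemma occ_flip_self (η : Config N) (i : Fin N) : occ (flipAt η i) i = 1 - occ η i := by
  unfold occ
  rw [flipAt_self]
  cases h : η i <;> simp

lemma occ_flip_ne (η : Config N) {i j : Fin N} (h : j ≠ i) : occ (flipAt η i) j = occ η j := by
  unfold occ; rw [flipAt_ne _ h]

lemma sum_flip (i : Fin N) (F : Config N → ℝ) :
    ∑ η : Config N, F (flipAt η i) = ∑ η : Config N, F η :=
  Fintype.sum_bijective (flipAt · i)
    (Function.Involutive.bijective (fun η => flipAt_flipAt η i)) _ _ (fun _ => rfl)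

lemma bern_flip_mul (ρ : ℝ) (η : Config N) (i : Fin N) :
    bern ρ (flipAt η i) * (if flipAt η i i then 1 - ρ else ρ)
      = bern ρ η * (if η i then 1 - ρ else ρ) := by
  unfold bern
  rw [← Finset.mul_prod_erase Finset.univ _ (Finset.mem_univ i),
      ← Finset.mul_prod_erase Finset.univ (fun j => if η j then ρ else 1 - ρ) (Finset.mem_univ i)]
  have hprod : ∏ j ∈ Finset.univ.erase i, (if flipAt η i j then ρ else 1 - ρ)
      = ∏ j ∈ Finset.univ.erase i, (if η j then ρ else 1 - ρ) :=
    Finset.prod_congr rfl fun j hj => by rw [flipAt_ne _ (Finset.ne_of_mem_erase hj)]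
  rw [hprod, flipAt_self]
  cases h : η i <;> simp [h] <;> ring

lemma bern_crate_flip (m : KCM) (ρ : ℝ) (η : Config N) (i : Fin N)
    (hc : constr m (flipAt η i) i = constr m η i) :
    bern ρ (flipAt η i) * crate m ρ (flipAt η i) i = bern ρ η * crate m ρ η i := by
  unfold crate
  rw [hc]
  calc bern ρ (flipAt η i) * (constr m η i * (if flipAt η i i then 1 - ρ else ρ))
      = constr m η i * (bern ρ (flipAt η i) * (if flipAt η i i then 1 - ρ else ρ)) := by ring
    _ = constr m η i * (bern ρ η * (if η i then 1 - ρ else ρ)) := by rw [bern_flip_mul]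
    _ = bern ρ η * (constr m η i * (if η i then 1 - ρ else ρ)) := by ring

lemma dirichlet_div_sqrt (m : KCM) (ρ : ℝ) {Z : ℝ} (hZ : 0 < Z) (h : Config N → ℝ) :
    dirichlet m ρ (fun η => h η / Real.sqrt Z) = dirichlet m ρ h / Z := by
  unfold dirichlet
  rw [Finset.sum_div]
  refine Finset.sum_congr rfl fun i _ => ?_
  rw [← expect_div]
  congr 1
  funext η
  rw [div_sub_div_same, div_pow, Real.sq_sqrt hZ.le, mul_div_assoc]

lemma expect_comp_cast (ρ : ℝ) {M N : ℕ} (h : M = N) (F : Config N → ℝ) :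
    expect ρ (fun η : Config M => F (fun i => η (Fin.cast h.symm i))) = expect ρ F := by
  subst h; rfl

lemma dirichlet_comp_cast (m : KCM) (ρ : ℝ) {M N : ℕ} (h : M = N) (F : Config N → ℝ) :
    dirichlet m ρ (fun η : Config M => F (fun i => η (Fin.cast h.symm i))) = dirichlet m ρ F := by
  subst h; rfl

lemma occAt_pos {bl br : ℝ} (η : Config N) {k : ℕ} (h0 : k ≠ 0) (hN : k ≤ N) :
    occAt η bl br k = occ η ⟨k - 1, by omega⟩ := by
  unfold occAt occ
  rw [dif_neg h0, dif_pos hN]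

end Helpers

section Core

variable {N : ℕ}

lemma amgm {t : ℝ} (ht : 0 < t) (x y : ℝ) :
    y ^ 2 - (y - x) ^ 2 ≤ t * y ^ 2 + (1 / t - 1) * x ^ 2 := by
  have h1 : 0 ≤ (t * y - x) ^ 2 := sq_nonneg _
  have h2 : 2 * x * y * t ≤ (t * y ^ 2 + x ^ 2 / t) * t := by
    have : (t * y ^ 2 + x ^ 2 / t) * t = t ^ 2 * y ^ 2 + x ^ 2 := by
      field_simp
    rw [this]; nlinarith
  have h3 : 2 * x * y ≤ t * y ^ 2 + x ^ 2 / t := le_of_mul_le_mul_right h2 ht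
  have h4 : (1 / t - 1) * x ^ 2 = x ^ 2 / t - x ^ 2 := by ring
  nlinarith

lemma site_other (ρ : ℝ) (hρ0 : 0 < ρ) (hρ1 : ρ < 1) (i b c : Fin N)
    (hbi : b ≠ i) (hci : c ≠ i) (g : Config N → ℝ) :
    expect ρ (fun η => crate KCM.fa2 ρ η i *
        (g (flipAt η i) * occ (flipAt η i) b * occ (flipAt η i) c
          - g η * occ η b * occ η c) ^ 2)
      ≤ expect ρ (fun η => crate KCM.fa2 ρ η i * (g (flipAt η i) - g η) ^ 2) := by
  apply expect_mono hρ0.le hρ1.le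
  intro η
  have hC : 0 ≤ crate KCM.fa2 ρ η i := crate_nonneg _ hρ0.le hρ1.le η i
  rw [occ_flip_ne η hbi, occ_flip_ne η hci]
  apply mul_le_mul_of_nonneg_left _ hC
  cases hb : η b <;> cases hc : η c <;> simp [occ, hb, hc] <;> positivity

lemma key_pt {C x y t P Q : ℝ} (hC : 0 ≤ C) (ht : 0 < t)
    (hP : P = 0 ∨ P = 1) (hQ : Q = 0 ∨ Q = 1) :
    C * (y * (1 - P) * Q - x * P * Q) ^ 2
      ≤ C * (y - x) ^ 2
        + C * (Q * (P * (t * x ^ 2 + (1 / t - 1) * y ^ 2)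
            + (1 - P) * (t * y ^ 2 + (1 / t - 1) * x ^ 2))) := by
  rcases hP with hP | hP <;> rcases hQ with hQ | hQ <;> subst hP <;> subst hQ
  · have h : (y * (1 - 0) * 0 - x * 0 * 0 : ℝ) ^ 2 = 0 := by ring
    rw [h]
    nlinarith [mul_nonneg hC (sq_nonneg (y - x))]
  · have h : (y * (1 - 0) * 1 - x * 0 * 1 : ℝ) ^ 2 = y ^ 2 := by ring
    rw [h]
    nlinarith [mul_le_mul_of_nonneg_left (amgm ht x y) hC]
  · have h : (y * (1 - 1) * 0 - x * 1 * 0 : ℝ) ^ 2 = 0 := by ring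
    rw [h]
    nlinarith [mul_nonneg hC (sq_nonneg (y - x))]
  · have h : (y * (1 - 1) * 1 - x * 1 * 1 : ℝ) ^ 2 = x ^ 2 := by ring
    rw [h]
    nlinarith [mul_le_mul_of_nonneg_left (amgm ht y x) hC]

lemma S1_pt (ρ : ℝ) (i p o : Fin N)
    (hconstr : ∀ η : Config N, constr KCM.fa2 η i = 1 - occ η o * occ η p)
    (g : Config N → ℝ) (η : Config N) :
    crate KCM.fa2 ρ η i * occ η p * occ η i * g η ^ 2
      = (1 - ρ) * (g η ^ 2 * (occ η p * (1 - occ η o) * occ η i)) := by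
  unfold crate
  rw [hconstr]
  unfold occ
  cases hi : η i <;> cases hp : η p <;> cases ho : η o <;>
    simp only [hi, hp, ho, Bool.false_eq_true, ite_true, ite_false, if_true, if_false] <;> ring

lemma S2_pt {ρ : ℝ} (hρ0 : 0 < ρ) (i p : Fin N) (g : Config N → ℝ) (η : Config N) :
    crate KCM.fa2 ρ η i * occ η p * (1 - occ η i) * g η ^ 2
      ≤ ρ * (g η ^ 2 * (occ η p * (1 - occ η i))) := by
  have hop : (0:ℝ) ≤ (if η p then (1:ℝ) else 0) := by split <;> norm_num
  unfold crate
  rcases constr_zero_or_one KCM.fa2 η i with hc | hc <;> rw [hc] <;> unfold occ <;>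
    cases hi : η i <;>
    simp only [hi, Bool.false_eq_true, ite_true, ite_false, if_true, if_false] <;>
    nlinarith [sq_nonneg (g η), hop, hρ0,
      mul_nonneg (mul_nonneg hρ0.le (sq_nonneg (g η))) hop]

lemma expect_flip_pair (ρ : ℝ) (i p o : Fin N) (hpi : p ≠ i) (hoi : o ≠ i)
    (hconstr : ∀ η : Config N, constr KCM.fa2 η i = 1 - occ η o * occ η p)
    (a b : ℝ) (g : Config N → ℝ) :
    expect ρ (fun η => crate KCM.fa2 ρ η i * occ η p * (occ η i * a + (1 - occ η i) * b)
        * g (flipAt η i) ^ 2)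
      = expect ρ (fun η => crate KCM.fa2 ρ η i * occ η p * (occ η i * b + (1 - occ η i) * a)
        * g η ^ 2) := by
  unfold _root_.expect
  rw [← sum_flip i (fun η => bern ρ η *
    (crate KCM.fa2 ρ η i * occ η p * (occ η i * a + (1 - occ η i) * b) * g (flipAt η i) ^ 2))]
  refine Finset.sum_congr rfl fun η _ => ?_
  have hcf : constr KCM.fa2 (flipAt η i) i = constr KCM.fa2 η i := by
    rw [hconstr, hconstr, occ_flip_ne η hoi, occ_flip_ne η hpi]
  have hdb := bern_crate_flip KCM.fa2 ρ η i hcf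
  rw [flipAt_flipAt, occ_flip_ne η hpi, occ_flip_self]
  calc bern ρ (flipAt η i) * (crate KCM.fa2 ρ (flipAt η i) i * occ η p *
          ((1 - occ η i) * a + (1 - (1 - occ η i)) * b) * g η ^ 2)
      = (bern ρ (flipAt η i) * crate KCM.fa2 ρ (flipAt η i) i) *
          (occ η p * ((1 - occ η i) * a + occ η i * b) * g η ^ 2) := by ring
    _ = (bern ρ η * crate KCM.fa2 ρ η i) *
          (occ η p * ((1 - occ η i) * a + occ η i * b) * g η ^ 2) := by rw [hdb]
    _ = bern ρ η * (crate KCM.fa2 ρ η i * occ η p *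
          (occ η i * b + (1 - occ η i) * a) * g η ^ 2) := by ring

set_option maxHeartbeats 1000000 in
lemma site_bound (ρ u : ℝ) (hρ0 : 0 < ρ) (hρ1 : ρ < 1) (hu : 0 ≤ u)
    (i p o : Fin N) (hpi : p ≠ i) (hoi : o ≠ i)
    (hconstr : ∀ η : Config N, constr KCM.fa2 η i = 1 - occ η o * occ η p)
    (g : Config N → ℝ)
    (h1 : expect ρ (fun η => g η ^ 2 * (occ η p * (1 - occ η o) * occ η i)) ≤ u)
    (h2 : expect ρ (fun η => g η ^ 2 * (occ η p * (1 - occ η i))) ≤ u) :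
    expect ρ (fun η => crate KCM.fa2 ρ η i *
        (g (flipAt η i) * occ (flipAt η i) i * occ (flipAt η i) p
          - g η * occ η i * occ η p) ^ 2)
      ≤ expect ρ (fun η => crate KCM.fa2 ρ η i * (g (flipAt η i) - g η) ^ 2)
        + 4 * Real.sqrt (ρ * (1 - ρ)) * u := by
  have h1ρ : 0 < 1 - ρ := by linarith
  set t : ℝ := Real.sqrt (ρ / (1 - ρ)) with ht_def
  have ht : 0 < t := Real.sqrt_pos.mpr (div_pos hρ0 h1ρ)
  set R : ℝ := Real.sqrt (ρ * (1 - ρ)) with hR_def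
  have hR : 0 ≤ R := Real.sqrt_nonneg _
  have htR : t * (1 - ρ) = R := by
    rw [ht_def, hR_def, Real.sqrt_div hρ0.le, div_mul_eq_mul_div, Real.sqrt_mul hρ0.le]
    rw [mul_div_assoc, Real.div_sqrt]
  have hsR : (1 / t - 1) * ρ ≤ R := by
    have h1t : 1 / t = Real.sqrt ((1 - ρ) / ρ) := by
      rw [ht_def, one_div, ← Real.sqrt_inv, inv_div]
    have h2t : Real.sqrt ((1 - ρ) / ρ) * ρ = R := by
      rw [hR_def, Real.sqrt_div h1ρ.le, div_mul_eq_mul_div, mul_comm ρ (1-ρ),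
        Real.sqrt_mul h1ρ.le, mul_div_assoc, Real.div_sqrt]
    nlinarith [h2t, h1t]
  have key : ∀ η : Config N,
      crate KCM.fa2 ρ η i *
        (g (flipAt η i) * occ (flipAt η i) i * occ (flipAt η i) p
          - g η * occ η i * occ η p) ^ 2
      ≤ crate KCM.fa2 ρ η i * (g (flipAt η i) - g η) ^ 2
        + crate KCM.fa2 ρ η i * (occ η p *
            (occ η i * (t * g η ^ 2 + (1 / t - 1) * g (flipAt η i) ^ 2)
             + (1 - occ η i) * (t * g (flipAt η i) ^ 2 + (1 / t - 1) * g η ^ 2))) := by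
    intro η
    have hC : 0 ≤ crate KCM.fa2 ρ η i := crate_nonneg _ hρ0.le hρ1.le η i
    rw [occ_flip_ne η hpi, occ_flip_self]
    exact key_pt hC ht (occ_zero_or_one η i) (occ_zero_or_one η p)
  have step1 : expect ρ (fun η => crate KCM.fa2 ρ η i *
        (g (flipAt η i) * occ (flipAt η i) i * occ (flipAt η i) p
          - g η * occ η i * occ η p) ^ 2)
      ≤ expect ρ (fun η => crate KCM.fa2 ρ η i * (g (flipAt η i) - g η) ^ 2)
        + expect ρ (fun η => crate KCM.fa2 ρ η i * (occ η p *
            (occ η i * (t * g η ^ 2 + (1 / t - 1) * g (flipAt η i) ^ 2)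
             + (1 - occ η i) * (t * g (flipAt η i) ^ 2 + (1 / t - 1) * g η ^ 2)))) := by
    rw [← expect_add]
    exact expect_mono hρ0.le hρ1.le key
  have hsplit : (fun η : Config N => crate KCM.fa2 ρ η i * (occ η p *
            (occ η i * (t * g η ^ 2 + (1 / t - 1) * g (flipAt η i) ^ 2)
             + (1 - occ η i) * (t * g (flipAt η i) ^ 2 + (1 / t - 1) * g η ^ 2))))
      = (fun η : Config N =>
          (crate KCM.fa2 ρ η i * occ η p * (occ η i * t + (1 - occ η i) * (1 / t - 1))
            * g η ^ 2)
          + (crate KCM.fa2 ρ η i * occ η p * (occ η i * (1 / t - 1) + (1 - occ η i) * t)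
            * g (flipAt η i) ^ 2)) := by
    funext η; ring
  have hS1 : expect ρ (fun η =>
        crate KCM.fa2 ρ η i * occ η p * occ η i * g η ^ 2) ≤ (1 - ρ) * u := by
    have : (fun η : Config N => crate KCM.fa2 ρ η i * occ η p * occ η i * g η ^ 2)
        = (fun η : Config N => (1 - ρ) * (g η ^ 2 * (occ η p * (1 - occ η o) * occ η i))) :=
      funext fun η => S1_pt ρ i p o hconstr g η
    rw [this, expect_const_mul]
    exact mul_le_mul_of_nonneg_left h1 h1ρ.le
  have hS2ub : expect ρ (fun η =>
        crate KCM.fa2 ρ η i * occ η p * (1 - occ η i) * g η ^ 2) ≤ ρ * u := by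
    calc expect ρ (fun η => crate KCM.fa2 ρ η i * occ η p * (1 - occ η i) * g η ^ 2)
        ≤ expect ρ (fun η => ρ * (g η ^ 2 * (occ η p * (1 - occ η i)))) :=
          expect_mono hρ0.le hρ1.le (fun η => S2_pt hρ0 i p g η)
      _ = ρ * expect ρ (fun η => g η ^ 2 * (occ η p * (1 - occ η i))) :=
          expect_const_mul _ _ _
      _ ≤ ρ * u := mul_le_mul_of_nonneg_left h2 hρ0.le
  have hS2lb : 0 ≤ expect ρ (fun η =>
      crate KCM.fa2 ρ η i * occ η p * (1 - occ η i) * g η ^ 2) := by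
    apply expect_nonneg hρ0.le hρ1.le
    intro η
    have h1i : occ η i ≤ 1 := by
      rcases occ_zero_or_one η i with h | h <;> rw [h] <;> norm_num
    apply mul_nonneg _ (sq_nonneg _)
    apply mul_nonneg _ (by linarith)
    exact mul_nonneg (crate_nonneg _ hρ0.le hρ1.le η i) (occ_nonneg η p)
  have hE : expect ρ (fun η => crate KCM.fa2 ρ η i * (occ η p *
            (occ η i * (t * g η ^ 2 + (1 / t - 1) * g (flipAt η i) ^ 2)
             + (1 - occ η i) * (t * g (flipAt η i) ^ 2 + (1 / t - 1) * g η ^ 2))))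
      ≤ 4 * R * u := by
    rw [hsplit, expect_add, expect_flip_pair ρ i p o hpi hoi hconstr (1/t-1) t g]
    have hSrw : (fun η : Config N =>
          crate KCM.fa2 ρ η i * occ η p * (occ η i * t + (1 - occ η i) * (1 / t - 1))
            * g η ^ 2)
        = (fun η : Config N =>
            t * (crate KCM.fa2 ρ η i * occ η p * occ η i * g η ^ 2)
            + (1 / t - 1) * (crate KCM.fa2 ρ η i * occ η p * (1 - occ η i) * g η ^ 2)) := by
      funext η; ring
    rw [hSrw, expect_add, expect_const_mul, expect_const_mul]
    have htS1 : t * expect ρ (fun η => crate KCM.fa2 ρ η i * occ η p * occ η i * g η ^ 2)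
        ≤ R * u := by
      calc t * expect ρ (fun η => crate KCM.fa2 ρ η i * occ η p * occ η i * g η ^ 2)
          ≤ t * ((1 - ρ) * u) := mul_le_mul_of_nonneg_left hS1 ht.le
        _ = (t * (1 - ρ)) * u := by ring
        _ = R * u := by rw [htR]
    rcases le_or_gt 0 (1 / t - 1) with hs | hs
    · have hts : (1 / t - 1) * expect ρ (fun η =>
            crate KCM.fa2 ρ η i * occ η p * (1 - occ η i) * g η ^ 2) ≤ R * u := by
        calc (1 / t - 1) * expect ρ (fun η =>
              crate KCM.fa2 ρ η i * occ η p * (1 - occ η i) * g η ^ 2)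
            ≤ (1 / t - 1) * (ρ * u) := mul_le_mul_of_nonneg_left hS2ub hs
          _ = ((1 / t - 1) * ρ) * u := by ring
          _ ≤ R * u := mul_le_mul_of_nonneg_right hsR hu
      linarith
    · have hts : (1 / t - 1) * expect ρ (fun η =>
            crate KCM.fa2 ρ η i * occ η p * (1 - occ η i) * g η ^ 2) ≤ 0 :=
        mul_nonpos_of_nonpos_of_nonneg hs.le hS2lb
      nlinarith [mul_nonneg hR hu]
  linarith [step1, hE]

set_option maxHeartbeats 1000000 in
lemma dirichlet_indicator_bound (ρ u : ℝ) (hρ0 : 0 < ρ) (hρ1 : ρ < 1) (hu : 0 ≤ u)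
    (a b c d : Fin N) (hcb : c ≠ b) (hab : a ≠ b) (hbc : b ≠ c) (hdc : d ≠ c)
    (hconstr_b : ∀ η : Config N, constr KCM.fa2 η b = 1 - occ η a * occ η c)
    (hconstr_c : ∀ η : Config N, constr KCM.fa2 η c = 1 - occ η d * occ η b)
    (g : Config N → ℝ)
    (hb1 : expect ρ (fun η => g η ^ 2 * (occ η c * (1 - occ η a) * occ η b)) ≤ u)
    (hb2 : expect ρ (fun η => g η ^ 2 * (occ η c * (1 - occ η b))) ≤ u)
    (hc1 : expect ρ (fun η => g η ^ 2 * (occ η b * (1 - occ η d) * occ η c)) ≤ u)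
    (hc2 : expect ρ (fun η => g η ^ 2 * (occ η b * (1 - occ η c))) ≤ u) :
    dirichlet KCM.fa2 ρ (fun ζ => g ζ * occ ζ b * occ ζ c)
      ≤ dirichlet KCM.fa2 ρ g + 8 * Real.sqrt (ρ * (1 - ρ)) * u := by
  set R : ℝ := Real.sqrt (ρ * (1 - ρ)) with hR_def
  have hbnd : ∀ j : Fin N,
      expect ρ (fun η => crate KCM.fa2 ρ η j *
          ((fun ζ => g ζ * occ ζ b * occ ζ c) (flipAt η j)
            - (fun ζ => g ζ * occ ζ b * occ ζ c) η) ^ 2)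
        ≤ expect ρ (fun η => crate KCM.fa2 ρ η j * (g (flipAt η j) - g η) ^ 2)
          + ((if j = b then 4 * R * u else 0)
            + (if j = c then 4 * R * u else 0)) := by
    intro j
    by_cases hjb : j = b
    · subst hjb
      rw [if_pos rfl, if_neg hbc]
      have h := site_bound ρ u hρ0 hρ1 hu j c a hcb hab hconstr_b g hb1 hb2
      show expect ρ (fun η => crate KCM.fa2 ρ η j *
          (g (flipAt η j) * occ (flipAt η j) j * occ (flipAt η j) c
            - g η * occ η j * occ η c) ^ 2)
        ≤ expect ρ (fun η => crate KCM.fa2 ρ η j * (g (flipAt η j) - g η) ^ 2)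
          + (4 * R * u + 0)
      rw [hR_def]
      linarith [h]
    · by_cases hjc : j = c
      · subst hjc
        rw [if_neg hcb, if_pos rfl]
        have h := site_bound ρ u hρ0 hρ1 hu j b d hbc hdc hconstr_c g hc1 hc2
        have hcomm : (fun η : Config N => crate KCM.fa2 ρ η j *
            (g (flipAt η j) * occ (flipAt η j) b * occ (flipAt η j) j
              - g η * occ η b * occ η j) ^ 2)
          = (fun η : Config N => crate KCM.fa2 ρ η j *
            (g (flipAt η j) * occ (flipAt η j) j * occ (flipAt η j) b
              - g η * occ η j * occ η b) ^ 2) := by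
          funext η; ring
        show expect ρ (fun η => crate KCM.fa2 ρ η j *
            (g (flipAt η j) * occ (flipAt η j) b * occ (flipAt η j) j
              - g η * occ η b * occ η j) ^ 2)
          ≤ expect ρ (fun η => crate KCM.fa2 ρ η j * (g (flipAt η j) - g η) ^ 2)
            + (0 + 4 * R * u)
        rw [hcomm, hR_def]
        linarith [h]
      · rw [if_neg hjb, if_neg hjc]
        have h := site_other ρ hρ0 hρ1 j b c (fun hh => hjb hh.symm) (fun hh => hjc hh.symm) g
        show expect ρ (fun η => crate KCM.fa2 ρ η j *
            (g (flipAt η j) * occ (flipAt η j) b * occ (flipAt η j) c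
              - g η * occ η b * occ η c) ^ 2)
          ≤ expect ρ (fun η => crate KCM.fa2 ρ η j * (g (flipAt η j) - g η) ^ 2)
            + (0 + 0)
        linarith [h]
  unfold dirichlet
  calc ∑ j : Fin N, expect ρ (fun η => crate KCM.fa2 ρ η j *
          ((fun ζ => g ζ * occ ζ b * occ ζ c) (flipAt η j)
            - (fun ζ => g ζ * occ ζ b * occ ζ c) η) ^ 2)
      ≤ ∑ j : Fin N, (expect ρ (fun η => crate KCM.fa2 ρ η j * (g (flipAt η j) - g η) ^ 2)
          + ((if j = b then 4 * R * u else 0) + (if j = c then 4 * R * u else 0))) :=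
        Finset.sum_le_sum fun j _ => hbnd j
    _ = (∑ j : Fin N, expect ρ (fun η => crate KCM.fa2 ρ η j * (g (flipAt η j) - g η) ^ 2))
          + ((∑ j : Fin N, if j = b then 4 * R * u else 0)
            + (∑ j : Fin N, if j = c then 4 * R * u else 0)) := by
        rw [Finset.sum_add_distrib, Finset.sum_add_distrib]
    _ = (∑ j : Fin N, expect ρ (fun η => crate KCM.fa2 ρ η j * (g (flipAt η j) - g η) ^ 2))
          + (4 * R * u + 4 * R * u) := by
        rw [Finset.sum_ite_eq' Finset.univ b (fun _ => 4 * R * u),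
          Finset.sum_ite_eq' Finset.univ c (fun _ => 4 * R * u),
          if_pos (Finset.mem_univ b), if_pos (Finset.mem_univ c)]
    _ = (∑ j : Fin N, expect ρ (fun η => crate KCM.fa2 ρ η j * (g (flipAt η j) - g η) ^ 2))
          + 8 * R * u := by ring

end Core

set_option maxHeartbeats 2000000 in
/-- **Approximation of the two-boundary interface energy** (Section 5.1).
For FA-1f with two empty boundaries at density `ρ ∈ (0,1)`, integers `L, L' ≥ 1`
and `u ∈ (0,1)`: every probability density `f` on `Ω_{L+L'+4}` with
`ν(f·η_{L+1}η_{L+2}η_{L+3}η_{L+4}) ≥ 1−u` satisfies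
`𝒟_{L+L'+4}(√f) ≥ Σ_{L+1,L'+1} − (8√(ρ(1−ρ)) + Σ_{L+1,L'+1})·u`. -/
theorem sigmaTwo_approx (ρ : ℝ) (hρ0 : 0 < ρ) (hρ1 : ρ < 1)
    (L L' : ℕ) (hL : 1 ≤ L) (hL' : 1 ≤ L') (u : ℝ) (hu0 : 0 < u) (hu1 : u < 1)
    (f : Config (L + L' + 4) → ℝ) (hf : ∀ η, 0 ≤ f η) (hf1 : expect ρ f = 1)
    (hfc : 1 - u ≤ expect ρ (fun η => f η * occ η ⟨L, by omega⟩ * occ η ⟨L + 1, by omega⟩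
        * occ η ⟨L + 2, by omega⟩ * occ η ⟨L + 3, by omega⟩)) :
    SigmaTwo ρ (L + 1) (L' + 1)
        - (8 * Real.sqrt (ρ * (1 - ρ)) + SigmaTwo ρ (L + 1) (L' + 1)) * u
      ≤ dirichlet KCM.fa2 ρ (fun η => Real.sqrt (f η)) := by
  have hu : (0:ℝ) ≤ u := hu0.le
  have pa : L < L + L' + 4 := by omega
  have pb : L + 1 < L + L' + 4 := by omega
  have pc : L + 2 < L + L' + 4 := by omega
  have pd : L + 3 < L + L' + 4 := by omega
  set g : Config (L + L' + 4) → ℝ := fun η => Real.sqrt (f η) with hg_def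
  have hgsq : ∀ η, g η ^ 2 = f η := fun η => Real.sq_sqrt (hf η)
  have hcb : (⟨L + 2, pc⟩ : Fin (L + L' + 4)) ≠ ⟨L + 1, pb⟩ := by
    intro h; simp only [Fin.mk.injEq] at h; omega
  have hab : (⟨L, pa⟩ : Fin (L + L' + 4)) ≠ ⟨L + 1, pb⟩ := by
    intro h; simp only [Fin.mk.injEq] at h; omega
  have hbc : (⟨L + 1, pb⟩ : Fin (L + L' + 4)) ≠ ⟨L + 2, pc⟩ := by
    intro h; simp only [Fin.mk.injEq] at h; omega
  have hdc : (⟨L + 3, pd⟩ : Fin (L + L' + 4)) ≠ ⟨L + 2, pc⟩ := by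
    intro h; simp only [Fin.mk.injEq] at h; omega
  have hπ : 1 - u ≤ expect ρ (fun η => f η * occ η ⟨L, pa⟩ * occ η ⟨L + 1, pb⟩
      * occ η ⟨L + 2, pc⟩ * occ η ⟨L + 3, pd⟩) := hfc
  set Z : ℝ := expect ρ (fun η => f η * occ η ⟨L + 1, pb⟩ * occ η ⟨L + 2, pc⟩) with hZ_def
  have hZ1 : 1 - u ≤ Z := by
    refine le_trans hπ ?_
    rw [hZ_def]
    apply expect_mono hρ0.le hρ1.le
    intro η
    rcases occ_zero_or_one η ⟨L, pa⟩ with h1 | h1 <;>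
      rcases occ_zero_or_one η ⟨L + 1, pb⟩ with h2 | h2 <;>
      rcases occ_zero_or_one η ⟨L + 2, pc⟩ with h3 | h3 <;>
      rcases occ_zero_or_one η ⟨L + 3, pd⟩ with h4 | h4 <;>
      simp only [h1, h2, h3, h4] <;> nlinarith [hf η]
  have hZpos : 0 < Z := by linarith
  have hδ : expect ρ (fun η => f η - f η * occ η ⟨L, pa⟩ * occ η ⟨L + 1, pb⟩
      * occ η ⟨L + 2, pc⟩ * occ η ⟨L + 3, pd⟩) ≤ u := by
    rw [expect_sub, hf1]; linarith
  have hocc4 : ∀ X : Config (L + L' + 4) → ℝ,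
      (∀ η, X η ≤ f η - f η * occ η ⟨L, pa⟩ * occ η ⟨L + 1, pb⟩
        * occ η ⟨L + 2, pc⟩ * occ η ⟨L + 3, pd⟩) → expect ρ X ≤ u :=
    fun X hX => le_trans (expect_mono hρ0.le hρ1.le hX) hδ
  have hb1 : expect ρ (fun η => g η ^ 2 *
      (occ η ⟨L + 2, pc⟩ * (1 - occ η ⟨L, pa⟩) * occ η ⟨L + 1, pb⟩)) ≤ u := by
    apply hocc4
    intro η
    rw [hgsq η]
    rcases occ_zero_or_one η ⟨L, pa⟩ with h1 | h1 <;>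
      rcases occ_zero_or_one η ⟨L + 1, pb⟩ with h2 | h2 <;>
      rcases occ_zero_or_one η ⟨L + 2, pc⟩ with h3 | h3 <;>
      rcases occ_zero_or_one η ⟨L + 3, pd⟩ with h4 | h4 <;>
      simp only [h1, h2, h3, h4] <;> nlinarith [hf η]
  have hb2 : expect ρ (fun η => g η ^ 2 *
      (occ η ⟨L + 2, pc⟩ * (1 - occ η ⟨L + 1, pb⟩))) ≤ u := by
    apply hocc4
    intro η
    rw [hgsq η]
    rcases occ_zero_or_one η ⟨L, pa⟩ with h1 | h1 <;>
      rcases occ_zero_or_one η ⟨L + 1, pb⟩ with h2 | h2 <;>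
      rcases occ_zero_or_one η ⟨L + 2, pc⟩ with h3 | h3 <;>
      rcases occ_zero_or_one η ⟨L + 3, pd⟩ with h4 | h4 <;>
      simp only [h1, h2, h3, h4] <;> nlinarith [hf η]
  have hc1 : expect ρ (fun η => g η ^ 2 *
      (occ η ⟨L + 1, pb⟩ * (1 - occ η ⟨L + 3, pd⟩) * occ η ⟨L + 2, pc⟩)) ≤ u := by
    apply hocc4
    intro η
    rw [hgsq η]
    rcases occ_zero_or_one η ⟨L, pa⟩ with h1 | h1 <;>
      rcases occ_zero_or_one η ⟨L + 1, pb⟩ with h2 | h2 <;>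
      rcases occ_zero_or_one η ⟨L + 2, pc⟩ with h3 | h3 <;>
      rcases occ_zero_or_one η ⟨L + 3, pd⟩ with h4 | h4 <;>
      simp only [h1, h2, h3, h4] <;> nlinarith [hf η]
  have hc2 : expect ρ (fun η => g η ^ 2 *
      (occ η ⟨L + 1, pb⟩ * (1 - occ η ⟨L + 2, pc⟩))) ≤ u := by
    apply hocc4
    intro η
    rw [hgsq η]
    rcases occ_zero_or_one η ⟨L, pa⟩ with h1 | h1 <;>
      rcases occ_zero_or_one η ⟨L + 1, pb⟩ with h2 | h2 <;>
      rcases occ_zero_or_one η ⟨L + 2, pc⟩ with h3 | h3 <;>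
      rcases occ_zero_or_one η ⟨L + 3, pd⟩ with h4 | h4 <;>
      simp only [h1, h2, h3, h4] <;> nlinarith [hf η]
  have hconstr_b : ∀ η : Config (L + L' + 4),
      constr KCM.fa2 η ⟨L + 1, pb⟩ = 1 - occ η ⟨L, pa⟩ * occ η ⟨L + 2, pc⟩ := by
    intro η
    show 1 - occAt η 0 0 (L + 1) * occAt η 0 0 (L + 1 + 2) = _
    rw [occAt_pos (k := L + 1) η (by omega) (by omega),
      occAt_pos (k := L + 1 + 2) η (by omega) (by omega)]
    rfl
  have hconstr_c : ∀ η : Config (L + L' + 4),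
      constr KCM.fa2 η ⟨L + 2, pc⟩ = 1 - occ η ⟨L + 3, pd⟩ * occ η ⟨L + 1, pb⟩ := by
    intro η
    show 1 - occAt η 0 0 (L + 2) * occAt η 0 0 (L + 2 + 2) = _
    rw [occAt_pos (k := L + 2) η (by omega) (by omega),
      occAt_pos (k := L + 2 + 2) η (by omega) (by omega)]
    show 1 - occ η ⟨L + 1, pb⟩ * occ η ⟨L + 3, pd⟩ = _
    ring
  -- transported density
  have hMN : L + 1 + (L' + 1) + 2 = L + L' + 4 := by omega
  set F2 : Config (L + L' + 4) → ℝ :=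
    fun ζ => f ζ * occ ζ ⟨L + 1, pb⟩ * occ ζ ⟨L + 2, pc⟩ / Z with hF2_def
  set ftil : Config (L + 1 + (L' + 1) + 2) → ℝ :=
    fun η' => F2 (fun i => η' (Fin.cast hMN.symm i)) with hftil_def
  have cond1 : ∀ η', 0 ≤ ftil η' := by
    intro η'
    rw [hftil_def, hF2_def]
    exact div_nonneg (mul_nonneg (mul_nonneg (hf _) (occ_nonneg _ _)) (occ_nonneg _ _)) hZpos.le
  have hEF2 : expect ρ F2 = 1 := by
    rw [hF2_def, expect_div, ← hZ_def, div_self hZpos.ne']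
  have cond2 : expect ρ ftil = 1 := by
    rw [hftil_def]
    rw [expect_comp_cast ρ hMN F2]
    exact hEF2
  have cond3 : expect ρ (fun η' => ftil η' * occ η' ⟨L + 1, by omega⟩
      * occ η' ⟨L + 1 + 1, by omega⟩) = 1 := by
    have e3 : expect ρ (fun η' => ftil η' * occ η' ⟨L + 1, by omega⟩
        * occ η' ⟨L + 1 + 1, by omega⟩)
        = expect ρ (fun ζ : Config (L + L' + 4) =>
            F2 ζ * occ ζ ⟨L + 1, pb⟩ * occ ζ ⟨L + 2, pc⟩) :=
      expect_comp_cast ρ hMN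
        (fun ζ => F2 ζ * occ ζ ⟨L + 1, pb⟩ * occ ζ ⟨L + 2, pc⟩)
    rw [e3]
    have hidem : (fun ζ : Config (L + L' + 4) =>
          F2 ζ * occ ζ ⟨L + 1, pb⟩ * occ ζ ⟨L + 2, pc⟩) = F2 := by
      funext ζ
      rw [hF2_def]
      rcases occ_zero_or_one ζ ⟨L + 1, pb⟩ with h2 | h2 <;>
        rcases occ_zero_or_one ζ ⟨L + 2, pc⟩ with h3 | h3 <;>
        simp only [h2, h3, mul_zero, zero_mul, mul_one, zero_div] <;> ring
    rw [hidem]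
    exact hEF2
  have step_a : SigmaTwo ρ (L + 1) (L' + 1)
      ≤ dirichlet KCM.fa2 ρ (fun η' => Real.sqrt (ftil η')) := by
    apply csInf_le
    · refine ⟨0, ?_⟩
      rintro x ⟨f', -, -, -, rfl⟩
      exact dirichlet_nonneg _ hρ0.le hρ1.le _
    · exact ⟨ftil, cond1, cond2, cond3, rfl⟩
  have step_b : dirichlet KCM.fa2 ρ (fun η' => Real.sqrt (ftil η'))
      = dirichlet KCM.fa2 ρ (fun ζ : Config (L + L' + 4) => Real.sqrt (F2 ζ)) :=
    dirichlet_comp_cast KCM.fa2 ρ hMN (fun ζ => Real.sqrt (F2 ζ))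
  have step_c : (fun ζ : Config (L + L' + 4) => Real.sqrt (F2 ζ))
      = fun ζ => (g ζ * occ ζ ⟨L + 1, pb⟩ * occ ζ ⟨L + 2, pc⟩) / Real.sqrt Z := by
    funext ζ
    rw [hF2_def]
    show Real.sqrt (f ζ * occ ζ ⟨L + 1, pb⟩ * occ ζ ⟨L + 2, pc⟩ / Z) = _
    rw [Real.sqrt_div (mul_nonneg (mul_nonneg (hf ζ) (occ_nonneg _ _)) (occ_nonneg _ _)) Z]
    rw [hg_def]
    rcases occ_zero_or_one ζ ⟨L + 1, pb⟩ with h2 | h2 <;>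
      rcases occ_zero_or_one ζ ⟨L + 2, pc⟩ with h3 | h3 <;>
      simp only [h2, h3, mul_zero, zero_mul, mul_one, Real.sqrt_zero]
  have step_d : dirichlet KCM.fa2 ρ
        (fun ζ : Config (L + L' + 4) =>
          (g ζ * occ ζ ⟨L + 1, pb⟩ * occ ζ ⟨L + 2, pc⟩) / Real.sqrt Z)
      = dirichlet KCM.fa2 ρ
          (fun ζ : Config (L + L' + 4) => g ζ * occ ζ ⟨L + 1, pb⟩ * occ ζ ⟨L + 2, pc⟩) / Z :=
    dirichlet_div_sqrt KCM.fa2 ρ hZpos _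
  have hSigle : SigmaTwo ρ (L + 1) (L' + 1)
      ≤ dirichlet KCM.fa2 ρ
          (fun ζ : Config (L + L' + 4) => g ζ * occ ζ ⟨L + 1, pb⟩ * occ ζ ⟨L + 2, pc⟩) / Z := by
    rw [← step_d, ← step_c, ← step_b]
    exact step_a
  have hDgA := dirichlet_indicator_bound ρ u hρ0 hρ1 hu
    ⟨L, pa⟩ ⟨L + 1, pb⟩ ⟨L + 2, pc⟩ ⟨L + 3, pd⟩ hcb hab hbc hdc
    hconstr_b hconstr_c g hb1 hb2 hc1 hc2
  have hSig0 : 0 ≤ SigmaTwo ρ (L + 1) (L' + 1) := by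
    apply Real.sInf_nonneg
    rintro x ⟨f', -, -, -, rfl⟩
    exact dirichlet_nonneg _ hρ0.le hρ1.le _
  have hZD : SigmaTwo ρ (L + 1) (L' + 1) * Z
      ≤ dirichlet KCM.fa2 ρ
          (fun ζ : Config (L + L' + 4) => g ζ * occ ζ ⟨L + 1, pb⟩ * occ ζ ⟨L + 2, pc⟩) :=
    (le_div_iff₀ hZpos).mp hSigle
  have hmul : SigmaTwo ρ (L + 1) (L' + 1) * (1 - u) ≤ SigmaTwo ρ (L + 1) (L' + 1) * Z :=
    mul_le_mul_of_nonneg_left hZ1 hSig0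
  nlinarith [hZD, hmul, hDgA, Real.sqrt_nonneg (ρ * (1 - ρ))]
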